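/- arXiv:1803.10591 — 5 statements merged into one kernel-verified Lean document; each statement's English description precedes it below -/
import Mathlib

section
/- For all x ∈ ℝⁿ with (τ, x) ≠ (0, 0), the spectral norm of the Hessian satisfies ‖H_{p,τ}(x)‖₂ ≤ max{1, p−1} (τ² + |x|²)^{(p-2)/2}. -/
/-!
With `s = τ² + |x|²`, the Hessian is `a I + d x xᵀ` for `a = s^{(p-2)/2} > 0` and
`d = (p-2) s^{(p-4)/2}`. This symmetric matrix has eigenvalues `a` (on `x^⊥`) and
`a + d|x|² = a (1 + (p-2) θ)` with `θ = |x|²/s ∈ [0, 1]`, and `1 + (p-2) θ = (1-θ)·1 + θ·(p-1)`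
is a convex combination of the positive numbers `1` and `p-1`, hence lies in `(0, max{1, p-1}]`.
-/

theorem norm_smul_add_inner_smul_le {E : Type*} [NormedAddCommGroup E] [InnerProductSpace ℝ E]
    (a d : ℝ) (x y : E) :
    ‖a • y + (d * inner ℝ x y) • x‖ ≤ max |a| |a + d * ‖x‖ ^ 2| * ‖y‖ := by
  set t := inner ℝ x y
  set l := a + d * ‖x‖ ^ 2
  set M := max |a| |l|
  have hnorm_sq : ‖a • y + (d * t) • x‖ ^ 2
      = a ^ 2 * ‖y‖ ^ 2 + d * (2 * a + d * ‖x‖ ^ 2) * t ^ 2 := by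
    rw [norm_add_sq_real, real_inner_smul_left, real_inner_smul_right, real_inner_comm,
      norm_smul, norm_smul]
    simp only [Real.norm_eq_abs, mul_pow, sq_abs]
    ring
  have ht : t ^ 2 ≤ ‖x‖ ^ 2 * ‖y‖ ^ 2 := by
    rw [← mul_pow, ← sq_abs]
    exact pow_le_pow_left₀ (abs_nonneg _) (abs_real_inner_le_norm x y) 2
  have ha : a ^ 2 ≤ M ^ 2 := sq_le_sq.mpr ((le_max_left _ _).trans (le_abs_self M))
  have hl : l ^ 2 ≤ M ^ 2 := sq_le_sq.mpr ((le_max_right _ _).trans (le_abs_self M))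
  have hcross : d * (2 * a + d * ‖x‖ ^ 2) * t ^ 2 ≤ (M ^ 2 - a ^ 2) * ‖y‖ ^ 2 := by
    rcases le_total (d * (2 * a + d * ‖x‖ ^ 2)) 0 with he | he
    · nlinarith [mul_nonpos_of_nonpos_of_nonneg he (sq_nonneg t), sq_nonneg ‖y‖]
    · -- `d (2a + d|x|²) |x|² = l² - a²`
      calc d * (2 * a + d * ‖x‖ ^ 2) * t ^ 2
          ≤ d * (2 * a + d * ‖x‖ ^ 2) * (‖x‖ ^ 2 * ‖y‖ ^ 2) := by gcongr
        _ = (l ^ 2 - a ^ 2) * ‖y‖ ^ 2 := by ring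
        _ ≤ (M ^ 2 - a ^ 2) * ‖y‖ ^ 2 := by gcongr
  have hM : 0 ≤ M := (abs_nonneg a).trans (le_max_left _ _)
  refine le_of_sq_le_sq ?_ (by positivity)
  rw [hnorm_sq, mul_pow]
  linarith

theorem abs_one_add_sub_two_mul_le_max {p θ : ℝ} (hp : 1 < p) (hθ₀ : 0 ≤ θ) (hθ₁ : θ ≤ 1) :
    |1 + (p - 2) * θ| ≤ max 1 (p - 1) := by
  have hconv : 1 + (p - 2) * θ = (1 - θ) * 1 + θ * (p - 1) := by ring
  have h1 := le_max_left 1 (p - 1)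
  have h2 := le_max_right 1 (p - 1)
  rw [hconv, abs_of_nonneg (by nlinarith)]
  nlinarith

theorem stmt_3_general (n : ℕ) (p τ : ℝ) (hp : 1 < p)
    (x : EuclideanSpace ℝ (Fin n)) (hx : τ ≠ 0 ∨ x ≠ 0) :
    ∀ y : EuclideanSpace ℝ (Fin n),
      ‖((τ ^ 2 + ‖x‖ ^ 2) ^ ((p - 2) / 2)) • y
          + ((p - 2) * (τ ^ 2 + ‖x‖ ^ 2) ^ ((p - 4) / 2) * (inner ℝ x y : ℝ)) • x‖
        ≤ max 1 (p - 1) * (τ ^ 2 + ‖x‖ ^ 2) ^ ((p - 2) / 2) * ‖y‖ := by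
  intro y
  set s := τ ^ 2 + ‖x‖ ^ 2
  have hs : 0 < s := by
    rcases hx with hτ | hx
    · positivity
    · have := norm_pos_iff.mpr hx
      positivity
  have hθ₁ : ‖x‖ ^ 2 / s ≤ 1 := div_le_one_of_le₀ (by simp [s, sq_nonneg τ]) hs.le
  set a := s ^ ((p - 2) / 2)
  have ha : 0 < a := Real.rpow_pos_of_pos hs _
  have heig : a + (p - 2) * s ^ ((p - 4) / 2) * ‖x‖ ^ 2 = a * (1 + (p - 2) * (‖x‖ ^ 2 / s)) := by
    rw [show (p - 4) / 2 = (p - 2) / 2 - 1 by ring, Real.rpow_sub_one hs.ne']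
    ring
  calc _ ≤ max |a| |a + (p - 2) * s ^ ((p - 4) / 2) * ‖x‖ ^ 2| * ‖y‖ :=
        norm_smul_add_inner_smul_le _ _ x y
    _ ≤ max 1 (p - 1) * a * ‖y‖ := by
        gcongr
        rw [heig, abs_mul, abs_of_pos ha, mul_comm _ a]
        refine max_le (le_mul_of_one_le_right ha.le (le_max_left _ _)) ?_
        gcongr
        exact abs_one_add_sub_two_mul_le_max hp (by positivity) hθ₁

/-- Spectral norm bound for the Hessian
`H_{p,τ}(x) = (τ²+|x|²)^{(p-2)/2} I + (p−2)(τ²+|x|²)^{(p-4)/2} x xᵀ`: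
`‖H_{p,τ}(x)‖₂ ≤ max{1, p−1}(τ²+|x|²)^{(p-2)/2}` for `(τ,x) ≠ (0,0)`,
stated as a bound on `‖H_{p,τ}(x) y‖` for every vector `y`. -/
theorem stmt_3 (n : ℕ) (p τ : ℝ) (hp : 1 < p) (hτ : 0 ≤ τ)
    (x : EuclideanSpace ℝ (Fin n)) (hx : τ ≠ 0 ∨ x ≠ 0) :
    ∀ y : EuclideanSpace ℝ (Fin n),
      ‖((τ ^ 2 + ‖x‖ ^ 2) ^ ((p - 2) / 2)) • y
          + ((p - 2) * (τ ^ 2 + ‖x‖ ^ 2) ^ ((p - 4) / 2) * (inner ℝ x y : ℝ)) • x‖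
        ≤ max 1 (p - 1) * (τ ^ 2 + ‖x‖ ^ 2) ^ ((p - 2) / 2) * ‖y‖ :=
  stmt_3_general n p τ hp x hx
end

section
/- There exists a constant C = C(p) > 0 such that for all x, y ∈ ℝⁿ and all τ ≥ 0, (τ² + |x|² + |y|²)^{(p-2)/2} |x − y|² ≤ C (Dφ_{p,τ}(x) − Dφ_{p,τ}(y)) · (x − y). -/
/-!
Put `a = ‖x‖`, `b = ‖y‖`, `q = (p - 2) / 2`, `M = (τ² + a² + b²)^q` and
`f t = (τ² + t²)^q t` (`radialGrad p τ`, i.e. `Dφ_{p,τ}` in dimension one). Both sides of the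
inequality are affine in `⟪x, y⟫ ∈ [-ab, ab]`, so it suffices to check the endpoints
`⟪x, y⟫ = ±ab`; there it becomes `c M (a ∓ b) ≤ f a ∓ f b` for `0 ≤ b ≤ a`
(`RadialGradLowerBound p c`).
For `p ≤ 2` the minus sign follows from the mean value theorem, since
`f' t = (τ² + t²)^(q-1) (τ² + (p-1) t²) ≥ (p - 1) M` on `[b, a]`, and the plus sign from
`M ≤ (τ² + t²)^q` for `t ∈ {a, b}`. For `p ≥ 2` both follow from `B ≤ A` and `M ≤ 2^q A`,
where `A = (τ² + a²)^q` and `B = (τ² + b²)^q`.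
-/

open Real
open scoped RealInnerProductSpace

noncomputable def radialGrad (p τ t : ℝ) : ℝ := (τ ^ 2 + t ^ 2) ^ ((p - 2) / 2) * t

theorem mul_norm_sub_sq_le_inner_smul_sub_smul {E : Type*} [NormedAddCommGroup E]
    [InnerProductSpace ℝ E] {x y : E} {A B m : ℝ}
    (hsub : m * (‖x‖ - ‖y‖) ^ 2 ≤ (A * ‖x‖ - B * ‖y‖) * (‖x‖ - ‖y‖))
    (hadd : m * (‖x‖ + ‖y‖) ^ 2 ≤ (A * ‖x‖ + B * ‖y‖) * (‖x‖ + ‖y‖)) :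
    m * ‖x - y‖ ^ 2 ≤ ⟪A • x - B • y, x - y⟫ := by
  have hxy := abs_le.1 (abs_real_inner_le_norm x y)
  have hinner : ⟪A • x - B • y, x - y⟫
      = A * ‖x‖ ^ 2 - (A + B) * ⟪x, y⟫ + B * ‖y‖ ^ 2 := by
    simp only [inner_sub_left, inner_sub_right, real_inner_smul_left,
      real_inner_self_eq_norm_sq, real_inner_comm x y]
    ring
  rw [norm_sub_sq_real, hinner]
  -- the difference of the two sides is affine in `⟪x, y⟫`, with slope `2 m - (A + B)`
  rcases le_total (A + B) (2 * m) with h | h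
  · nlinarith
  · nlinarith

section Scalar

variable {p τ a b : ℝ}

@[simp] theorem radialGrad_zero : radialGrad p τ 0 = 0 := by simp [radialGrad]

theorem hasDerivAt_radialGrad {t : ℝ} (ht : 0 < τ ^ 2 + t ^ 2) :
    HasDerivAt (radialGrad p τ)
      ((τ ^ 2 + t ^ 2) ^ ((p - 2) / 2 - 1) * (τ ^ 2 + (p - 1) * t ^ 2)) t := by
  have h := (((hasDerivAt_pow 2 t).const_add (τ ^ 2)).rpow_const (p := (p - 2) / 2)
    (Or.inl ht.ne')).mul (hasDerivAt_id' t)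
  refine h.congr_deriv ?_
  rw [rpow_sub_one ht.ne']
  field_simp
  ring

theorem rpow_add_sq_le_two_rpow_mul {q : ℝ} (hq : 0 ≤ q) (hba : b ^ 2 ≤ a ^ 2) :
    (τ ^ 2 + a ^ 2 + b ^ 2) ^ q ≤ 2 ^ q * (τ ^ 2 + a ^ 2) ^ q := by
  rw [← mul_rpow zero_le_two (by positivity)]
  exact rpow_le_rpow (by positivity) (by nlinarith) hq


theorem rpow_mul_le_radialGrad {s t : ℝ} (hp : p ≤ 2) (ht : 0 ≤ t) (hs : τ ^ 2 + t ^ 2 ≤ s) :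
    s ^ ((p - 2) / 2) * t ≤ radialGrad p τ t := by
  rcases ht.eq_or_lt with rfl | ht
  · simp
  · exact mul_le_mul_of_nonneg_right
      (rpow_le_rpow_of_nonpos (by positivity) hs (by linarith)) ht.le

theorem sub_one_mul_le_radialGrad_sub (hp1 : 1 ≤ p) (hp2 : p ≤ 2) (hb : 0 ≤ b) (hba : b ≤ a) :
    (p - 1) * ((τ ^ 2 + a ^ 2 + b ^ 2) ^ ((p - 2) / 2) * (a - b))
      ≤ radialGrad p τ a - radialGrad p τ b := by
  set M := (τ ^ 2 + a ^ 2 + b ^ 2) ^ ((p - 2) / 2)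
  rcases hb.eq_or_lt with rfl | hb
  · have hMa : M * a ≤ radialGrad p τ a := rpow_mul_le_radialGrad hp2 hba (by simp)
    have hM : 0 ≤ M := rpow_nonneg (by positivity) _
    rw [radialGrad_zero, sub_zero, sub_zero]
    nlinarith [mul_nonneg hM hba]
  have hpos {t : ℝ} (ht : b ≤ t) : 0 < τ ^ 2 + t ^ 2 := by nlinarith
  have hderiv : ∀ t ∈ interior (Set.Icc b a), (p - 1) * M ≤ deriv (radialGrad p τ) t := by
    intro t ht
    rw [interior_Icc] at ht
    have ht0 := hpos ht.1.le
    rw [(hasDerivAt_radialGrad ht0).deriv]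
    calc (p - 1) * M ≤ (p - 1) * (τ ^ 2 + t ^ 2) ^ ((p - 2) / 2) :=
          mul_le_mul_of_nonneg_left
            (rpow_le_rpow_of_nonpos ht0 (by nlinarith [ht.1, ht.2]) (by linarith))
            (by linarith)
      _ = (τ ^ 2 + t ^ 2) ^ ((p - 2) / 2 - 1) * ((p - 1) * (τ ^ 2 + t ^ 2)) := by
          rw [rpow_sub_one ht0.ne']
          field_simp
      _ ≤ (τ ^ 2 + t ^ 2) ^ ((p - 2) / 2 - 1) * (τ ^ 2 + (p - 1) * t ^ 2) :=
          mul_le_mul_of_nonneg_left (by nlinarith) (rpow_nonneg ht0.le _)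
  rw [← mul_assoc]
  refine (convex_Icc b a).mul_sub_le_image_sub_of_le_deriv ?_ ?_ hderiv
    b ⟨le_rfl, hba⟩ a ⟨hba, le_rfl⟩ hba
  · exact fun t ht => (hasDerivAt_radialGrad (hpos ht.1)).continuousAt.continuousWithinAt
  · intro t ht
    rw [interior_Icc] at ht
    exact (hasDerivAt_radialGrad (hpos ht.1.le)).differentiableAt.differentiableWithinAt

theorem sub_one_mul_le_radialGrad_add (hp2 : p ≤ 2) (ha : 0 ≤ a) (hb : 0 ≤ b) :
    (p - 1) * ((τ ^ 2 + a ^ 2 + b ^ 2) ^ ((p - 2) / 2) * (a + b))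
      ≤ radialGrad p τ a + radialGrad p τ b := by
  have hM : 0 ≤ (τ ^ 2 + a ^ 2 + b ^ 2) ^ ((p - 2) / 2) * (a + b) :=
    mul_nonneg (rpow_nonneg (by positivity) _) (by linarith)
  have hMa := rpow_mul_le_radialGrad (τ := τ) (s := τ ^ 2 + a ^ 2 + b ^ 2) hp2 ha (by nlinarith)
  have hMb := rpow_mul_le_radialGrad (τ := τ) (s := τ ^ 2 + a ^ 2 + b ^ 2) hp2 hb (by nlinarith)
  nlinarith

theorem two_rpow_inv_mul_le_radialGrad_sub (hp : 2 ≤ p) (hb : 0 ≤ b) (hba : b ≤ a) :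
    (2 ^ (p / 2))⁻¹ * ((τ ^ 2 + a ^ 2 + b ^ 2) ^ ((p - 2) / 2) * (a - b))
      ≤ radialGrad p τ a - radialGrad p τ b := by
  have hq : 0 ≤ (p - 2) / 2 := by linarith
  have hBA : (τ ^ 2 + b ^ 2) ^ ((p - 2) / 2) ≤ (τ ^ 2 + a ^ 2) ^ ((p - 2) / 2) :=
    rpow_le_rpow (by positivity) (by nlinarith) hq
  have hMA := rpow_add_sq_le_two_rpow_mul (τ := τ) hq (by nlinarith : b ^ 2 ≤ a ^ 2)
  have h2 : (2 : ℝ) ^ ((p - 2) / 2) ≤ 2 ^ (p / 2) :=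
    rpow_le_rpow_of_exponent_le one_le_two (by linarith)
  rw [inv_mul_le_iff₀ (by positivity)]
  unfold radialGrad
  have hA : 0 ≤ (τ ^ 2 + a ^ 2) ^ ((p - 2) / 2) := rpow_nonneg (by positivity) _
  calc (τ ^ 2 + a ^ 2 + b ^ 2) ^ ((p - 2) / 2) * (a - b)
      ≤ 2 ^ (p / 2) * ((τ ^ 2 + a ^ 2) ^ ((p - 2) / 2) * (a - b)) := by
        rw [← mul_assoc]
        exact mul_le_mul_of_nonneg_right (hMA.trans (by gcongr)) (by linarith)
    _ ≤ _ := by gcongr; nlinarith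

theorem two_rpow_inv_mul_le_radialGrad_add (hp : 2 ≤ p) (hb : 0 ≤ b) (hba : b ≤ a) :
    (2 ^ (p / 2))⁻¹ * ((τ ^ 2 + a ^ 2 + b ^ 2) ^ ((p - 2) / 2) * (a + b))
      ≤ radialGrad p τ a + radialGrad p τ b := by
  have hq : 0 ≤ (p - 2) / 2 := by linarith
  have hMA := rpow_add_sq_le_two_rpow_mul (τ := τ) hq (by nlinarith : b ^ 2 ≤ a ^ 2)
  have hexp : (2 : ℝ) ^ (p / 2) = 2 ^ ((p - 2) / 2) * 2 := by
    rw [← rpow_add_one two_ne_zero]; ring_nf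
  have hB : 0 ≤ radialGrad p τ b := mul_nonneg (rpow_nonneg (by positivity) _) hb
  rw [inv_mul_le_iff₀ (by positivity), hexp]
  unfold radialGrad at hB ⊢
  have hA : 0 ≤ (τ ^ 2 + a ^ 2) ^ ((p - 2) / 2) := rpow_nonneg (by positivity) _
  have h2q : 0 ≤ (2 : ℝ) ^ ((p - 2) / 2) := by positivity
  calc (τ ^ 2 + a ^ 2 + b ^ 2) ^ ((p - 2) / 2) * (a + b)
      ≤ 2 ^ ((p - 2) / 2) * (τ ^ 2 + a ^ 2) ^ ((p - 2) / 2) * (a + b) :=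
        mul_le_mul_of_nonneg_right hMA (by linarith)
    _ ≤ _ := by nlinarith [mul_nonneg h2q hA, mul_nonneg h2q hB]

def RadialGradLowerBound (p c : ℝ) : Prop :=
  ∀ τ a b : ℝ, 0 ≤ b → b ≤ a →
    c * ((τ ^ 2 + a ^ 2 + b ^ 2) ^ ((p - 2) / 2) * (a - b))
        ≤ radialGrad p τ a - radialGrad p τ b ∧
      c * ((τ ^ 2 + a ^ 2 + b ^ 2) ^ ((p - 2) / 2) * (a + b))
        ≤ radialGrad p τ a + radialGrad p τ b

theorem radialGradLowerBound_of_le_two (hp1 : 1 ≤ p) (hp2 : p ≤ 2) :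
    RadialGradLowerBound p (p - 1) := fun _ _ _ hb hba =>
  ⟨sub_one_mul_le_radialGrad_sub hp1 hp2 hb hba,
    sub_one_mul_le_radialGrad_add hp2 (hb.trans hba) hb⟩

theorem radialGradLowerBound_of_two_le (hp : 2 ≤ p) :
    RadialGradLowerBound p (2 ^ (p / 2))⁻¹ := fun _ _ _ hb hba =>
  ⟨two_rpow_inv_mul_le_radialGrad_sub hp hb hba, two_rpow_inv_mul_le_radialGrad_add hp hb hba⟩

end Scalar

namespace RadialGradLowerBound

variable {p c a b : ℝ}

theorem mul_sq_le_sub_mul_sub (h : RadialGradLowerBound p c) (τ : ℝ) (ha : 0 ≤ a) (hb : 0 ≤ b) :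
    c * (τ ^ 2 + a ^ 2 + b ^ 2) ^ ((p - 2) / 2) * (a - b) ^ 2
      ≤ (radialGrad p τ a - radialGrad p τ b) * (a - b) := by
  rcases le_total b a with hba | hab
  · nlinarith [mul_le_mul_of_nonneg_right (h τ a b hb hba).1 (sub_nonneg.2 hba)]
  · have hsub := mul_le_mul_of_nonneg_right (h τ b a ha hab).1 (sub_nonneg.2 hab)
    rw [add_right_comm] at hsub
    nlinarith

theorem mul_sq_le_add_mul_add (h : RadialGradLowerBound p c) (τ : ℝ) (ha : 0 ≤ a) (hb : 0 ≤ b) :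
    c * (τ ^ 2 + a ^ 2 + b ^ 2) ^ ((p - 2) / 2) * (a + b) ^ 2
      ≤ (radialGrad p τ a + radialGrad p τ b) * (a + b) := by
  rcases le_total b a with hba | hab
  · nlinarith [mul_le_mul_of_nonneg_right (h τ a b hb hba).2 (add_nonneg ha hb)]
  · have hadd := mul_le_mul_of_nonneg_right (h τ b a ha hab).2 (add_nonneg hb ha)
    rw [add_right_comm] at hadd
    nlinarith

theorem mul_le_inner {E : Type*} [NormedAddCommGroup E] [InnerProductSpace ℝ E]
    (h : RadialGradLowerBound p c) (τ : ℝ) (x y : E) :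
    c * ((τ ^ 2 + ‖x‖ ^ 2 + ‖y‖ ^ 2) ^ ((p - 2) / 2) * ‖x - y‖ ^ 2)
      ≤ ⟪(τ ^ 2 + ‖x‖ ^ 2) ^ ((p - 2) / 2) • x - (τ ^ 2 + ‖y‖ ^ 2) ^ ((p - 2) / 2) • y, x - y⟫ := by
  rw [← mul_assoc]
  exact mul_norm_sub_sq_le_inner_smul_sub_smul
    (h.mul_sq_le_sub_mul_sub τ (norm_nonneg x) (norm_nonneg y))
    (h.mul_sq_le_add_mul_add τ (norm_nonneg x) (norm_nonneg y))

end RadialGradLowerBound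

theorem exists_rpow_mul_norm_sub_sq_le_inner {E : Type*} [NormedAddCommGroup E]
    [InnerProductSpace ℝ E] {p : ℝ} (hp : 1 < p) :
    ∃ C > 0, ∀ (τ : ℝ) (x y : E), (τ ^ 2 + ‖x‖ ^ 2 + ‖y‖ ^ 2) ^ ((p - 2) / 2) * ‖x - y‖ ^ 2
      ≤ C * ⟪(τ ^ 2 + ‖x‖ ^ 2) ^ ((p - 2) / 2) • x - (τ ^ 2 + ‖y‖ ^ 2) ^ ((p - 2) / 2) • y,
          x - y⟫ := by
  obtain ⟨c, hc, h⟩ : ∃ c > 0, RadialGradLowerBound p c := by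
    rcases le_total p 2 with hp2 | hp2
    · exact ⟨p - 1, by linarith, radialGradLowerBound_of_le_two hp.le hp2⟩
    · exact ⟨_, by positivity, radialGradLowerBound_of_two_le hp2⟩
  exact ⟨c⁻¹, inv_pos.2 hc, fun τ x y => (le_inv_mul_iff₀ hc).2 (h.mul_le_inner τ x y)⟩

/-- Strong monotonicity inequality: there is `C = C(p) > 0` with
`(τ²+|x|²+|y|²)^{(p-2)/2}|x−y|² ≤ C (Dφ_{p,τ}(x) − Dφ_{p,τ}(y))·(x−y)`
for all `x, y ∈ ℝⁿ` and `τ ≥ 0`. -/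
theorem stmt_5 (n : ℕ) (p : ℝ) (hp : 1 < p) :
    ∃ C > 0, ∀ τ : ℝ, 0 ≤ τ → ∀ x y : EuclideanSpace ℝ (Fin n),
      (τ ^ 2 + ‖x‖ ^ 2 + ‖y‖ ^ 2) ^ ((p - 2) / 2) * ‖x - y‖ ^ 2
        ≤ C * (inner ℝ (((τ ^ 2 + ‖x‖ ^ 2) ^ ((p - 2) / 2)) • x
                - ((τ ^ 2 + ‖y‖ ^ 2) ^ ((p - 2) / 2)) • y) (x - y) : ℝ) := by
  obtain ⟨C, hC, h⟩ := exists_rpow_mul_norm_sub_sq_le_inner (E := EuclideanSpace ℝ (Fin n)) hp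
  exact ⟨C, hC, fun τ _ x y => h τ x y⟩
end

section
/- For all x ∈ ℝⁿ, 1 < p ≤ 2 and τ > 0: |x|^p ≤ 2^{(2-p)/2} (Dφ_{p,τ}(x) · x + τ^{2-p}(τ² + |x|²)^{(p-2)/2} |x|^p). -/
/-!
Put `S = τ² + |x|²` and `q = (2 - p)/2 ∈ [0, 1/2]`. Since `t ↦ t^q` is subadditive,
`S^q ≤ τ^{2-p} + |x|^{2-p}`; multiplying by `S^{-q} |x|^p` gives
`|x|^p ≤ S^{-q} (|x|² + τ^{2-p} |x|^p) = Dφ_{p,τ}(x)·x + τ^{2-p} S^{-q} |x|^p`.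
Subadditivity improves the elementary bound `S^q ≤ 2^q (τ^{2-p} + |x|^{2-p})`, so the factor
`2^q ≥ 1` is only a loss.
-/

lemma Real.rpow_add_sq_le {a b s : ℝ} (ha : 0 ≤ a) (hb : 0 ≤ b) (hs0 : 0 ≤ s) (hs2 : s ≤ 2) :
    (a ^ 2 + b ^ 2) ^ (s / 2) ≤ a ^ s + b ^ s := by
  have hsq : ∀ {c : ℝ}, 0 ≤ c → (c ^ 2) ^ (s / 2) = c ^ s := fun hc => by
    rw [← Real.rpow_natCast_mul hc]
    norm_num [mul_div_cancel₀]
  rw [← hsq ha, ← hsq hb]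
  exact Real.rpow_add_le_add_rpow (by positivity) (by positivity) (by linarith) (by linarith)

lemma Real.rpow_le_rpow_add_sq_mul {p τ r : ℝ} (hp0 : 0 ≤ p) (hp2 : p ≤ 2) (hτ : 0 < τ)
    (hr : 0 ≤ r) :
    r ^ p ≤ (τ ^ 2 + r ^ 2) ^ ((p - 2) / 2) * (r ^ 2 + τ ^ (2 - p) * r ^ p) := by
  have hS : 0 < τ ^ 2 + r ^ 2 := by positivity
  have hinv : (τ ^ 2 + r ^ 2) ^ ((p - 2) / 2) * (τ ^ 2 + r ^ 2) ^ ((2 - p) / 2) = 1 := by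
    rw [← Real.rpow_add hS, show (p - 2) / 2 + (2 - p) / 2 = 0 by ring, Real.rpow_zero]
  have hsplit : r ^ 2 = r ^ (2 - p) * r ^ p := by
    rw [← Real.rpow_add' hr (by norm_num), sub_add_cancel, Real.rpow_two]
  calc r ^ p
      = (τ ^ 2 + r ^ 2) ^ ((p - 2) / 2) * (τ ^ 2 + r ^ 2) ^ ((2 - p) / 2) * r ^ p := by
        rw [hinv, one_mul]
    _ ≤ (τ ^ 2 + r ^ 2) ^ ((p - 2) / 2) * (τ ^ (2 - p) + r ^ (2 - p)) * r ^ p := by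
        gcongr
        exact Real.rpow_add_sq_le hτ.le hr (by linarith) (by linarith)
    _ = (τ ^ 2 + r ^ 2) ^ ((p - 2) / 2) * (r ^ 2 + τ ^ (2 - p) * r ^ p) := by
        rw [hsplit]; ring

/-- For `1 < p ≤ 2` and `τ > 0`:
`|x|^p ≤ 2^{(2-p)/2}(Dφ_{p,τ}(x)·x + τ^{2-p}(τ²+|x|²)^{(p-2)/2}|x|^p)`. -/
theorem stmt_10 (n : ℕ) (p τ : ℝ) (hp1 : 1 < p) (hp2 : p ≤ 2) (hτ : 0 < τ)
    (x : EuclideanSpace ℝ (Fin n)) :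
    ‖x‖ ^ p ≤ 2 ^ ((2 - p) / 2) *
      ((inner ℝ (((τ ^ 2 + ‖x‖ ^ 2) ^ ((p - 2) / 2)) • x) x : ℝ)
        + τ ^ (2 - p) * (τ ^ 2 + ‖x‖ ^ 2) ^ ((p - 2) / 2) * ‖x‖ ^ p) := by
  have hbound := Real.rpow_le_rpow_add_sq_mul (by linarith) hp2 hτ (norm_nonneg x)
  have htwo : (1 : ℝ) ≤ 2 ^ ((2 - p) / 2) := Real.one_le_rpow (by norm_num) (by linarith)
  rw [real_inner_smul_left, real_inner_self_eq_norm_sq]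
  calc ‖x‖ ^ p
      ≤ (τ ^ 2 + ‖x‖ ^ 2) ^ ((p - 2) / 2) * (‖x‖ ^ 2 + τ ^ (2 - p) * ‖x‖ ^ p) := hbound
    _ ≤ 2 ^ ((2 - p) / 2) *
          ((τ ^ 2 + ‖x‖ ^ 2) ^ ((p - 2) / 2) * (‖x‖ ^ 2 + τ ^ (2 - p) * ‖x‖ ^ p)) :=
        le_mul_of_one_le_left (by positivity) htwo
    _ = _ := by ring
end

section
/- For every 1 < p < ∞ and τ > 0, all third-order partial derivatives of φ_{p,τ} satisfy the uniform bound max_{1≤j,k,l≤n} |∂³φ_{p,τ}/∂x_j∂x_k∂x_l (x)| ≤ C(p) (τ² + |x|²)^{(p-3)/2} for all x ∈ ℝⁿ, where C(p) > 0 depends only on p. -/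
/-!
Write `g = c + ‖x‖²` with `c > 0`. The derivative of `g ^ a` is `2a • g ^ (a - 1) • ⟪x, ·⟫`,
and the `j`-th derivative of `x ↦ ⟪x, ·⟫` is bounded by `g ^ ((1 - j) / 2)` (it is
`‖x‖ ≤ g ^ (1/2)`, then `1`, then `0`). Induction on the order with the Leibniz rule therefore
bounds the `m`-th derivative of `g ^ a` by a multiple of `g ^ (a - m / 2)`; the theorem is the
case `c = τ²`, `a = p / 2`, `m = 3`.
-/

open Real Finset
open scoped ContDiff

section

variable {E : Type*} [NormedAddCommGroup E] [InnerProductSpace ℝ E] {c : ℝ}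

theorem contDiff_rpow_add_norm_sq (hc : 0 < c) (a : ℝ) :
    ContDiff ℝ ∞ fun y : E => (c + ‖y‖ ^ 2) ^ a :=
  contDiff_iff_contDiffAt.2 fun x =>
    (contDiff_const.add (contDiff_norm_sq ℝ)).contDiffAt.rpow_const_of_ne (by positivity)

theorem fderiv_rpow_add_norm_sq (hc : 0 < c) (a : ℝ) :
    fderiv ℝ (fun y : E => (c + ‖y‖ ^ 2) ^ a) =
      fun x => (2 * a) • ((c + ‖x‖ ^ 2) ^ (a - 1) • innerSL ℝ x) := by
  funext x
  have h := ((hasStrictFDerivAt_norm_sq x).hasFDerivAt.const_add c).rpow_const (p := a)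
    (Or.inl (by positivity))
  refine h.fderiv.trans ?_
  ext y
  simp only [smul_apply, innerSL_apply_apply, smul_eq_mul]
  ring

theorem norm_iteratedFDeriv_innerSL_le (hc : 0 ≤ c) (x : E) (j : ℕ) :
    ‖iteratedFDeriv ℝ j (innerSL ℝ (E := E)) x‖ ≤ (c + ‖x‖ ^ 2) ^ ((1 - (j : ℝ)) / 2) := by
  match j with
  | 0 =>
    rw [norm_iteratedFDeriv_zero, innerSL_apply_norm, Nat.cast_zero, sub_zero,
      ← Real.sqrt_eq_rpow]
    exact Real.le_sqrt_of_sq_le (by linarith)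
  | 1 =>
    rw [← norm_iteratedFDeriv_fderiv, norm_iteratedFDeriv_zero, (innerSL ℝ).fderiv]
    simpa using norm_innerSL_le ℝ
  | j + 2 =>
    have hD : fderiv ℝ (innerSL ℝ (E := E)) = fun _ => innerSL ℝ :=
      funext fun _ => (innerSL ℝ).fderiv
    rw [← norm_iteratedFDeriv_fderiv, hD, iteratedFDeriv_const_of_ne j.succ_ne_zero]
    simp only [Pi.zero_apply, norm_zero]
    positivity

theorem norm_iteratedFDeriv_smul_innerSL_le (hc : 0 < c) {f : E → ℝ} {m : ℕ}
    (hf : ContDiff ℝ m f) {x : E} {C b : ℝ}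
    (hfx : ∀ i ≤ m, ‖iteratedFDeriv ℝ i f x‖ ≤ C * (c + ‖x‖ ^ 2) ^ (b - i / 2)) :
    ‖iteratedFDeriv ℝ m (fun y => f y • innerSL ℝ y) x‖ ≤
      2 ^ m * C * (c + ‖x‖ ^ 2) ^ (b - (m - 1) / 2) := by
  have hterm : ∀ i ∈ range (m + 1), (m.choose i : ℝ) * ‖iteratedFDeriv ℝ i f x‖ *
      ‖iteratedFDeriv ℝ (m - i) (innerSL ℝ (E := E)) x‖ ≤
        m.choose i * (C * (c + ‖x‖ ^ 2) ^ (b - (m - 1) / 2)) := by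
    intro i hi
    have hi : i ≤ m := Nat.lt_succ_iff.mp (mem_range.mp hi)
    have hexp : b - (m - 1) / 2 = (b - i / 2) + (1 - ((m - i : ℕ) : ℝ)) / 2 := by
      push_cast [Nat.cast_sub hi]; ring
    rw [mul_assoc, hexp, rpow_add (by positivity), ← mul_assoc C]
    gcongr
    · exact (norm_nonneg _).trans (hfx i hi)
    · exact hfx i hi
    · exact norm_iteratedFDeriv_innerSL_le hc.le x _
  calc ‖iteratedFDeriv ℝ m (fun y => f y • innerSL ℝ y) x‖
      ≤ ∑ i ∈ range (m + 1), (m.choose i : ℝ) * ‖iteratedFDeriv ℝ i f x‖ *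
          ‖iteratedFDeriv ℝ (m - i) (innerSL ℝ (E := E)) x‖ :=
        norm_iteratedFDeriv_smul_le hf (innerSL ℝ).contDiff x le_rfl
    _ ≤ ∑ i ∈ range (m + 1), m.choose i * (C * (c + ‖x‖ ^ 2) ^ (b - (m - 1) / 2)) :=
        sum_le_sum hterm
    _ = 2 ^ m * C * (c + ‖x‖ ^ 2) ^ (b - (m - 1) / 2) := by
        rw [← sum_mul, ← Nat.cast_sum, Nat.sum_range_choose, Nat.cast_pow, Nat.cast_ofNat,
          mul_assoc]

theorem exists_norm_iteratedFDeriv_rpow_add_norm_sq_le (hc : 0 < c) (m : ℕ) (a : ℝ) :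
    ∃ C > 0, ∀ (x : E), ∀ i ≤ m,
      ‖iteratedFDeriv ℝ i (fun y : E => (c + ‖y‖ ^ 2) ^ a) x‖ ≤
        C * (c + ‖x‖ ^ 2) ^ (a - i / 2) := by
  induction m generalizing a with
  | zero =>
    refine ⟨1, one_pos, fun x i hi => ?_⟩
    obtain rfl : i = 0 := Nat.le_zero.mp hi
    rw [norm_iteratedFDeriv_zero, norm_of_nonneg (by positivity)]
    simp
  | succ m ih =>
    obtain ⟨C₀, hC₀, h₀⟩ := ih a
    obtain ⟨C₁, -, h₁⟩ := ih (a - 1)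
    refine ⟨max C₀ (|2 * a| * (2 ^ m * C₁)), lt_max_of_lt_left hC₀, fun x i hi => ?_⟩
    rcases hi.lt_or_eq with hi | rfl
    · exact (h₀ x i (Nat.lt_succ_iff.mp hi)).trans (by gcongr; exact le_max_left _ _)
    have hf : ContDiff ℝ m fun y : E => (c + ‖y‖ ^ 2) ^ (a - 1) :=
      (contDiff_rpow_add_norm_sq hc (a - 1)).of_le (mod_cast le_top)
    rw [← norm_iteratedFDeriv_fderiv, fderiv_rpow_add_norm_sq hc,
      iteratedFDeriv_const_smul_apply' (f := fun y => (c + ‖y‖ ^ 2) ^ (a - 1) • innerSL ℝ y)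
        (hf.smul (innerSL ℝ).contDiff).contDiffAt, norm_smul, norm_eq_abs]
    calc |2 * a| * ‖iteratedFDeriv ℝ m (fun y => (c + ‖y‖ ^ 2) ^ (a - 1) • innerSL ℝ y) x‖
        ≤ |2 * a| * (2 ^ m * C₁ * (c + ‖x‖ ^ 2) ^ (a - 1 - (m - 1) / 2)) :=
          mul_le_mul_of_nonneg_left (norm_iteratedFDeriv_smul_innerSL_le hc hf (h₁ x))
            (abs_nonneg _)
      _ ≤ max C₀ (|2 * a| * (2 ^ m * C₁)) * (c + ‖x‖ ^ 2) ^ (a - ↑(m + 1) / 2) := by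
        rw [← mul_assoc, show a - 1 - (m - 1) / 2 = a - ↑(m + 1) / 2 by push_cast; ring]
        gcongr
        exact le_max_right _ _

end

/-- For `τ > 0`, all third-order partial derivatives of
`φ_{p,τ}(x) = (1/p)(τ²+|x|²)^{p/2}` satisfy
`|∂³φ_{p,τ}/∂x_j∂x_k∂x_l (x)| ≤ C(p) (τ²+|x|²)^{(p-3)/2}`. -/
theorem stmt_11 (n : ℕ) (p τ : ℝ) (hp : 1 < p) (hτ : 0 < τ) :
    ∃ C > 0, ∀ x : EuclideanSpace ℝ (Fin n), ∀ j k l : Fin n,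
      |iteratedFDeriv ℝ 3
          (fun y : EuclideanSpace ℝ (Fin n) => (1 / p) * (τ ^ 2 + ‖y‖ ^ 2) ^ (p / 2)) x
          ![EuclideanSpace.single j (1 : ℝ), EuclideanSpace.single k (1 : ℝ),
            EuclideanSpace.single l (1 : ℝ)]|
        ≤ C * (τ ^ 2 + ‖x‖ ^ 2) ^ ((p - 3) / 2) := by
  have hτ2 : 0 < τ ^ 2 := by positivity
  have hp0 : 0 < p := one_pos.trans hp
  obtain ⟨C, hC, hbound⟩ := exists_norm_iteratedFDeriv_rpow_add_norm_sq_le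
    (E := EuclideanSpace ℝ (Fin n)) hτ2 3 (p / 2)
  refine ⟨C / p, by positivity, fun x j k l => ?_⟩
  have hv : ‖![EuclideanSpace.single j (1 : ℝ), EuclideanSpace.single k (1 : ℝ),
      EuclideanSpace.single l (1 : ℝ)]‖ ≤ 1 := by
    simp [pi_norm_le_iff_of_nonneg, Fin.forall_fin_succ]
  have hD : iteratedFDeriv ℝ 3 (fun y : EuclideanSpace ℝ (Fin n) =>
      (1 / p) * (τ ^ 2 + ‖y‖ ^ 2) ^ (p / 2)) x =
        (1 / p) • iteratedFDeriv ℝ 3 (fun y => (τ ^ 2 + ‖y‖ ^ 2) ^ (p / 2)) x := by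
    simp_rw [← smul_eq_mul (1 / p)]
    exact iteratedFDeriv_const_smul_apply' ((contDiff_rpow_add_norm_sq hτ2 _).contDiffAt.of_le
      (by norm_cast))
  rw [← norm_eq_abs]
  calc _ ≤ ‖iteratedFDeriv ℝ 3 (fun y : EuclideanSpace ℝ (Fin n) =>
        (1 / p) * (τ ^ 2 + ‖y‖ ^ 2) ^ (p / 2)) x‖ :=
        ContinuousMultilinearMap.unit_le_opNorm _ hv
    _ = ‖iteratedFDeriv ℝ 3
        (fun y : EuclideanSpace ℝ (Fin n) => (τ ^ 2 + ‖y‖ ^ 2) ^ (p / 2)) x‖ / p := by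
        rw [hD, norm_smul, norm_of_nonneg (by positivity), one_div_mul_eq_div]
    _ ≤ C * (τ ^ 2 + ‖x‖ ^ 2) ^ (p / 2 - (3 : ℕ) / 2) / p := by
        gcongr
        exact hbound x 3 le_rfl
    _ = C / p * (τ ^ 2 + ‖x‖ ^ 2) ^ ((p - 3) / 2) := by
        rw [Nat.cast_ofNat, ← sub_div, mul_div_right_comm]
end

section
/- For 1 < p < 2, τ = 0 and x ≠ 0 ≠ y in ℝⁿ, the monotonicity inequality (|x|^{p-2}x − |y|^{p-2}y) · (x − y) ≥ c(p) (|x|² + |y|²)^{(p-2)/2} |x − y|² holds for some constant c(p) > 0 depending only on p. -/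
/-!
With `a = ‖x‖`, `b = ‖y‖`, `K = (a² + b²)^((p-2)/2)` and `s = ⟪x, y⟫`, the left side minus
`(p - 1) K ‖x - y‖²` splits as a radial part `(a^(p-1) - b^(p-1))(a - b) - (p - 1) K (a - b)²`
plus an angular part `(ab - s)(a^(p-2) + b^(p-2) - 2(p - 1) K)`. The radial part is nonnegative
by concavity of `t ↦ t^(p-1)` together with `K ≤ min (a^(p-2)) (b^(p-2))`; the angular part is a
product of two nonnegative factors by Cauchy–Schwarz and the same bound on `K`.
-/

open Real

lemma rpow_le_rpow_add_mul_rpow_sub_one_mul_sub {a b q : ℝ} (ha : 0 < a) (hb : 0 ≤ b)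
    (hq0 : 0 ≤ q) (hq1 : q ≤ 1) :
    b ^ q ≤ a ^ q + q * a ^ (q - 1) * (b - a) := by
  have bernoulli : (b / a) ^ q ≤ 1 + q * (b / a - 1) := by
    simpa using rpow_one_add_le_one_add_mul_self (s := b / a - 1)
      (by linarith [div_nonneg hb ha.le]) hq0 hq1
  calc b ^ q = a ^ q * (b / a) ^ q := by
        rw [div_rpow hb ha.le, mul_div_cancel₀ _ (rpow_pos_of_pos ha q).ne']
    _ ≤ a ^ q * (1 + q * (b / a - 1)) := by gcongr
    _ = a ^ q + q * a ^ (q - 1) * (b - a) := by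
        rw [rpow_sub_one ha.ne']; field_simp

lemma mul_sq_le_rpow_sub_rpow_mul_sub {a b q K : ℝ} (ha : 0 < a) (hb : 0 < b)
    (hq0 : 0 ≤ q) (hq1 : q ≤ 1) (hKa : K ≤ a ^ (q - 1)) (hKb : K ≤ b ^ (q - 1)) :
    q * K * (a - b) ^ 2 ≤ (a ^ q - b ^ q) * (a - b) := by
  rcases le_total b a with hba | hab
  · have tangent := rpow_le_rpow_add_mul_rpow_sub_one_mul_sub ha hb.le hq0 hq1
    nlinarith [mul_le_mul_of_nonneg_left hKa hq0, sq_nonneg (a - b)]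
  · have tangent := rpow_le_rpow_add_mul_rpow_sub_one_mul_sub hb ha.le hq0 hq1
    nlinarith [mul_le_mul_of_nonneg_left hKb hq0, sq_nonneg (a - b)]

lemma sq_add_sq_rpow_half_le_rpow {a b r : ℝ} (ha : 0 < a) (hr : r ≤ 0) :
    (a ^ 2 + b ^ 2) ^ (r / 2) ≤ a ^ r := by
  calc (a ^ 2 + b ^ 2) ^ (r / 2) ≤ (a ^ 2) ^ (r / 2) :=
        rpow_le_rpow_of_nonpos (by positivity) (by nlinarith [sq_nonneg b]) (by linarith)
    _ = a ^ r := by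
        rw [← rpow_natCast, ← rpow_mul ha.le]; norm_num; ring_nf

theorem inner_rpow_smul_sub_rpow_smul_ge {E : Type*} [NormedAddCommGroup E]
    [InnerProductSpace ℝ E] {p : ℝ} (hp1 : 1 ≤ p) (hp2 : p ≤ 2) {x y : E}
    (hx : x ≠ 0) (hy : y ≠ 0) :
    (p - 1) * (‖x‖ ^ 2 + ‖y‖ ^ 2) ^ ((p - 2) / 2) * ‖x - y‖ ^ 2 ≤
      inner ℝ (‖x‖ ^ (p - 2) • x - ‖y‖ ^ (p - 2) • y) (x - y) := by
  have ha : 0 < ‖x‖ := norm_pos_iff.mpr hx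
  have hb : 0 < ‖y‖ := norm_pos_iff.mpr hy
  set K := (‖x‖ ^ 2 + ‖y‖ ^ 2) ^ ((p - 2) / 2)
  have hKa : K ≤ ‖x‖ ^ (p - 2) := sq_add_sq_rpow_half_le_rpow ha (by linarith)
  have hKb : K ≤ ‖y‖ ^ (p - 2) := by
    simpa only [K, add_comm] using sq_add_sq_rpow_half_le_rpow (b := ‖x‖) hb (by linarith)
  have hK0 : 0 ≤ K := by positivity
  have hpow : ∀ t : ℝ, 0 < t → t ^ (p - 1) = t ^ (p - 2) * t := fun t ht => by
    rw [show p - 1 = p - 2 + 1 by ring, rpow_add_one ht.ne']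
  have hq : p - 1 - 1 = p - 2 := by ring
  have radial : (p - 1) * K * (‖x‖ - ‖y‖) ^ 2 ≤
      (‖x‖ ^ (p - 2) * ‖x‖ - ‖y‖ ^ (p - 2) * ‖y‖) * (‖x‖ - ‖y‖) := by
    rw [← hpow _ ha, ← hpow _ hb]
    exact mul_sq_le_rpow_sub_rpow_mul_sub ha hb (by linarith) (by linarith)
      (by rwa [hq]) (by rwa [hq])
  have angular : 0 ≤ (‖x‖ * ‖y‖ - inner ℝ x y) *
      (‖x‖ ^ (p - 2) + ‖y‖ ^ (p - 2) - 2 * ((p - 1) * K)) :=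
    mul_nonneg (by linarith [real_inner_le_norm x y])
      (by linarith [mul_le_mul_of_nonneg_right (show p - 1 ≤ 1 by linarith) hK0])
  rw [norm_sub_sq_real]
  simp only [inner_sub_left, inner_sub_right, real_inner_smul_left, real_inner_self_eq_norm_sq,
    real_inner_comm x y]
  linear_combination radial + angular

/-- For `1 < p < 2` and nonzero `x, y ∈ ℝⁿ`:
`(|x|^{p-2}x − |y|^{p-2}y)·(x−y) ≥ c(p)(|x|²+|y|²)^{(p-2)/2}|x−y|²`. -/
theorem stmt_13 (n : ℕ) (p : ℝ) (hp1 : 1 < p) (hp2 : p < 2) :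
    ∃ c > 0, ∀ x y : EuclideanSpace ℝ (Fin n), x ≠ 0 → y ≠ 0 →
      (inner ℝ ((‖x‖ ^ (p - 2)) • x - (‖y‖ ^ (p - 2)) • y) (x - y) : ℝ)
        ≥ c * (‖x‖ ^ 2 + ‖y‖ ^ 2) ^ ((p - 2) / 2) * ‖x - y‖ ^ 2 :=
  ⟨p - 1, by linarith, fun _ _ hx hy => inner_rpow_smul_sub_rpow_smul_ge hp1.le hp2.le hx hy⟩
end
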